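/- arXiv:2210.01160 — 5 statements merged into one kernel-verified Lean document; each statement's English description precedes it below -/
import Mathlib

section
/- Let m be an odd prime and let τ be a non-real complex number satisfying τ² - t·τ + n = 0 for integers t and n. Then there exists a complex number σ such that the subring ℤ[σ] of ℂ generated by σ equals ℤ[τ], and such that the square of the absolute value of σ (i.e. σ·conj(σ)) is an integer not divisible by m. (In fact σ can be taken of the form τ + k for some integer k, in which case σ·conj(σ) = n + k·t + k².) -/
/-!
Since `ℤ[τ + k] = ℤ[τ]` for every integer `k`, it suffices to find `k` with `m ∤ N(τ + k)`.
As `τ` is not real, `τ` and `conj τ` are the two roots of `X² - tX + n`, so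
`N(τ + k) = n + k t + k²`. This quadratic in `k` has constant second difference `2`, which an
odd prime does not divide, so it cannot vanish modulo `m` at all of `k = 0, 1, 2`.
-/

theorem Algebra.adjoin_singleton_add_algebraMap {R A : Type*} [CommRing R] [Ring A]
    [Algebra R A] (x : A) (r : R) :
    Algebra.adjoin R {x + algebraMap R A r} = Algebra.adjoin R {x} := by
  apply le_antisymm <;> apply Algebra.adjoin_singleton_le
  · exact add_mem (Algebra.self_mem_adjoin_singleton R x) (Subalgebra.algebraMap_mem _ r)
  · simpa using sub_mem (Algebra.self_mem_adjoin_singleton R (x + algebraMap R A r))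
      (Subalgebra.algebraMap_mem _ r)

theorem Algebra.adjoin_singleton_add_intCast {A : Type*} [Ring A] (x : A) (k : ℤ) :
    Algebra.adjoin ℤ {x + (k : A)} = Algebra.adjoin ℤ {x} := by
  simpa using Algebra.adjoin_singleton_add_algebraMap x k

open ComplexConjugate

namespace Complex

variable {τ : ℂ} {t n : ℤ}

theorem add_conj_eq_of_sq_sub_mul_add_eq_zero (hτ : τ.im ≠ 0)
    (hquad : τ ^ 2 - (t : ℂ) * τ + (n : ℂ) = 0) : τ + conj τ = t := by
  have hconj : conj τ ^ 2 - (t : ℂ) * conj τ + (n : ℂ) = 0 := by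
    simpa using congrArg conj hquad
  have hne : τ - conj τ ≠ 0 := by simp [sub_conj, hτ]
  have hprod : (τ - conj τ) * (τ + conj τ - t) = 0 := by linear_combination hquad - hconj
  exact sub_eq_zero.1 ((mul_eq_zero.1 hprod).resolve_left hne)

theorem mul_conj_add_intCast_of_sq_sub_mul_add_eq_zero (hτ : τ.im ≠ 0)
    (hquad : τ ^ 2 - (t : ℂ) * τ + (n : ℂ) = 0) (k : ℤ) :
    (τ + k) * conj (τ + k) = ((n + k * t + k ^ 2 : ℤ) : ℂ) := by
  have hsum := add_conj_eq_of_sq_sub_mul_add_eq_zero hτ hquad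
  simp only [map_add, map_intCast]
  push_cast
  linear_combination (k + τ) * hsum - hquad

end Complex

theorem Int.exists_not_dvd_add_mul_add_sq {m : ℤ} (hm : ¬ m ∣ 2) (t n : ℤ) :
    ∃ k : ℤ, ¬ m ∣ n + k * t + k ^ 2 := by
  by_contra! h
  have hsecond : (n + 2 * t + 2 ^ 2 - (n + 1 * t + 1 ^ 2))
      - (n + 1 * t + 1 ^ 2 - (n + 0 * t + 0 ^ 2)) = 2 := by ring
  exact hm (hsecond ▸ dvd_sub (dvd_sub (h 2) (h 1)) (dvd_sub (h 1) (h 0)))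

theorem Nat.Prime.not_dvd_two_of_odd {m : ℕ} (hm : m.Prime) (hmodd : Odd m) : ¬ m ∣ 2 := by
  intro h
  rcases Nat.prime_two.eq_one_or_self_of_dvd m h with rfl | rfl
  · exact Nat.not_prime_one hm
  · exact Nat.not_even_iff_odd.2 hmodd even_two

/-- Lemma 3.1: an imaginary quadratic order `ℤ[τ]` admits a generator whose
norm (= `σ * conj σ`) is an integer not divisible by the odd prime `m`. -/
theorem exists_generator_norm_coprime
    (m : ℕ) (hm : m.Prime) (hmodd : Odd m)
    (t n : ℤ) (τ : ℂ) (hτ : τ.im ≠ 0)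
    (hquad : τ ^ 2 - (t : ℂ) * τ + (n : ℂ) = 0) :
    ∃ σ : ℂ, Algebra.adjoin ℤ {σ} = Algebra.adjoin ℤ {τ} ∧
      ∃ N : ℤ, σ * (starRingEnd ℂ) σ = (N : ℂ) ∧ ¬ ((m : ℤ) ∣ N) := by
  have hm2 : ¬ (m : ℤ) ∣ 2 := by exact_mod_cast hm.not_dvd_two_of_odd hmodd
  obtain ⟨k, hk⟩ := Int.exists_not_dvd_add_mul_add_sq hm2 t n
  exact ⟨τ + k, Algebra.adjoin_singleton_add_intCast τ k, _,
    Complex.mul_conj_add_intCast_of_sq_sub_mul_add_eq_zero hτ hquad k, hk⟩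
end

section
/- For every integer d < 0, there exists an element σ of the ring ℤ√d (the ring Zsqrtd d of elements a + b√d with a, b ∈ ℤ) such that the norm of σ (namely a² - d·b² for σ = a + b√d) is odd and σ generates ℤ√d as a ℤ-algebra, i.e. Algebra.adjoin ℤ {σ} = ⊤. -/
/-!
The element `σ = (d + 1) + √d` works for every `d`: it differs from `√d` by an integer, so it
generates `ℤ[√d]`, and its norm `(d + 1)² - d = d (d + 1) + 1` is odd.
-/

theorem Algebra.adjoin_singleton_algebraMap_add {R A : Type*} [CommRing R] [Ring A]
    [Algebra R A] (r : R) (x : A) :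
    Algebra.adjoin R {algebraMap R A r + x} = Algebra.adjoin R {x} := by
  have hr (S : Subalgebra R A) : algebraMap R A r ∈ S := S.algebraMap_mem r
  refine le_antisymm (Algebra.adjoin_le ?_) (Algebra.adjoin_le ?_) <;>
    rw [Set.singleton_subset_iff]
  · exact add_mem (hr _) (Algebra.self_mem_adjoin_singleton R x)
  · simpa using sub_mem (Algebra.self_mem_adjoin_singleton R (algebraMap R A r + x)) (hr _)

namespace Zsqrtd

theorem adjoin_sqrtd (d : ℤ) : Algebra.adjoin ℤ {(sqrtd : ℤ√d)} = ⊤ := by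
  refine eq_top_iff.mpr fun z _ => ?_
  obtain ⟨x, y⟩ := z
  rw [decompose]
  have hsqrtd := Algebra.self_mem_adjoin_singleton ℤ (sqrtd : ℤ√d)
  exact add_mem (intCast_mem _ x) (mul_mem hsqrtd (intCast_mem _ y))

theorem norm_intCast_add_sqrtd (d n : ℤ) : ((n : ℤ√d) + sqrtd).norm = n * n - d := by
  simp [norm_def]

end Zsqrtd

theorem exists_generator_odd_norm_general (d : ℤ) :
    ∃ σ : ℤ√d, Odd σ.norm ∧ Algebra.adjoin ℤ {σ} = ⊤ := by
  refine ⟨((d + 1 : ℤ) : ℤ√d) + Zsqrtd.sqrtd, ?_, ?_⟩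
  · rw [Zsqrtd.norm_intCast_add_sqrtd]
    convert (Int.even_mul_succ_self d).add_one using 1
    ring
  · rw [← eq_intCast (algebraMap ℤ (ℤ√d)), Algebra.adjoin_singleton_algebraMap_add,
      Zsqrtd.adjoin_sqrtd]

/-- Lemma 3.2 for the orders `ℤ[√d]`: there is a generator of odd norm. -/
theorem exists_generator_odd_norm (d : ℤ) (hd : d < 0) :
    ∃ σ : ℤ√d, Odd σ.norm ∧ Algebra.adjoin ℤ {σ} = ⊤ :=
  exists_generator_odd_norm_general d
end

section
/- Let F be a field, V an F-vector space with finrank F V = 2, and e : V → V → F an alternating F-bilinear form (e(v,v) = 0 for all v). Let f : V → V be an F-linear map and α ∈ F such that (f - α·id) ∘ (f - α·id) = 0. Suppose Q, Q' ∈ V satisfy f(Q) ∉ F·Q and f(Q') ∉ F·Q'. Then there exists μ ∈ F with μ ≠ 0 such that e(Q', f(Q')) = μ²·e(Q, f(Q)). -/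
/-!
With `g = f - α • id` we have `g ∘ g = 0`, and replacing `f` by `g` changes neither the
non-eigenvector condition nor `e(Q, f Q)`, since `e` is alternating. For a non-eigenvector `Q`
the pair `Q, g Q` is a basis, and writing `Q' = a • Q + c • g Q` gives `g Q' = a • g Q`, whence
`e(Q', g Q') = a² e(Q, g Q) + a c e(g Q, g Q) = a² e(Q, g Q)`; finally `a ≠ 0` because `Q'` is
not an eigenvector.
-/

open Submodule

section

variable {F V : Type*} [Field F] [AddCommGroup V] [Module F V]

lemma ne_zero_of_apply_notMem_span_singleton {f : V →ₗ[F] V} {v : V}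
    (hv : f v ∉ span F {v}) : v ≠ 0 := by
  rintro rfl
  simp at hv

lemma sub_smul_id_apply_mem_span_singleton_iff (f : V →ₗ[F] V) (α : F) (v : V) :
    (f - α • LinearMap.id : V →ₗ[F] V) v ∈ span F {v} ↔ f v ∈ span F {v} := by
  have hαv : α • v ∈ span F {v} := smul_mem _ _ (mem_span_singleton_self v)
  simpa using sub_mem_iff_left _ hαv

lemma exists_smul_add_smul_eq_of_finrank_eq_two (hdim : Module.finrank F V = 2) {v u : V}
    (hv : v ≠ 0) (hu : u ∉ span F {v}) (w : V) : ∃ a c : F, a • v + c • u = w := by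
  have hli : LinearIndependent F ![v, u] :=
    (LinearIndependent.pair_iff' hv).mpr fun a h ↦ hu (mem_span_singleton.mpr ⟨a, h⟩)
  have hspan := hli.span_eq_top_of_card_eq_finrank (by simp [hdim])
  rw [Matrix.range_cons, Matrix.range_cons, Matrix.range_empty, Set.union_empty,
    Set.singleton_union] at hspan
  exact mem_span_pair.mp (hspan ▸ mem_top)

lemma apply_smul_add_smul_apply_of_comp_self_eq_zero {g : V →ₗ[F] V} (hg : g ∘ₗ g = 0)
    (v : V) (a c : F) : g (a • v + c • g v) = a • g v := by
  have hggv : g (g v) = 0 := LinearMap.congr_fun hg v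
  simp [hggv]

variable (e : V →ₗ[F] V →ₗ[F] F) (halt : ∀ v : V, e v v = 0)
include halt

lemma apply_sub_smul_id_apply_of_alternating (f : V →ₗ[F] V) (α : F) (v : V) :
    e v ((f - α • LinearMap.id : V →ₗ[F] V) v) = e v (f v) := by
  simp [halt v]

lemma apply_self_apply_smul_add_smul_of_comp_self_eq_zero {g : V →ₗ[F] V}
    (hg : g ∘ₗ g = 0) (v : V) (a c : F) :
    e (a • v + c • g v) (g (a • v + c • g v)) = a ^ 2 * e v (g v) := by
  rw [apply_smul_add_smul_apply_of_comp_self_eq_zero hg]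
  simp only [map_add, map_smul, LinearMap.add_apply, LinearMap.smul_apply, halt, smul_eq_mul]
  ring

end

/-- Invariance statement from the proof of Theorem 1.1: if `(f - α•id)² = 0` on
a 2-dimensional space, then the pairing value `e(Q, f Q)` of a non-eigenvector
`Q` is independent of `Q` up to nonzero square factors. -/
theorem pairing_nonEigenvector_invariance (F : Type*) [Field F] (V : Type*)
    [AddCommGroup V] [Module F V] (hdim : Module.finrank F V = 2)
    (e : V →ₗ[F] V →ₗ[F] F) (halt : ∀ v : V, e v v = 0)
    (f : V →ₗ[F] V) (α : F)
    (hf : (f - α • (LinearMap.id : V →ₗ[F] V)) ∘ₗ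
          (f - α • (LinearMap.id : V →ₗ[F] V)) = 0)
    (Q Q' : V) (hQ : f Q ∉ Submodule.span F {Q}) (hQ' : f Q' ∉ Submodule.span F {Q'}) :
    ∃ μ : F, μ ≠ 0 ∧ e Q' (f Q') = μ ^ 2 * e Q (f Q) := by
  set g : V →ₗ[F] V := f - α • LinearMap.id
  have hgQ : g Q ∉ span F {Q} := (sub_smul_id_apply_mem_span_singleton_iff f α Q).not.mpr hQ
  obtain ⟨a, c, rfl⟩ := exists_smul_add_smul_eq_of_finrank_eq_two hdim
    (ne_zero_of_apply_notMem_span_singleton hQ) hgQ Q'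
  have ha : a ≠ 0 := by
    rintro rfl
    apply hQ'
    rw [← sub_smul_id_apply_mem_span_singleton_iff f α,
      apply_smul_add_smul_apply_of_comp_self_eq_zero hf, zero_smul F (g Q)]
    exact zero_mem _
  refine ⟨a, ha, ?_⟩
  rw [← apply_sub_smul_id_apply_of_alternating e halt f α,
    ← apply_sub_smul_id_apply_of_alternating e halt f α Q]
  exact apply_self_apply_smul_add_smul_of_comp_self_eq_zero e halt hf Q a c
end

section
/- Let V be a module over ℤ/4ℤ and e : V → V → ℤ/4ℤ an alternating (ℤ/4ℤ)-bilinear form (e(v,v) = 0 for all v). Let P₀, P ∈ V, let α, β ∈ ℤ/4ℤ be units, and let M : V → V be a (ℤ/4ℤ)-linear map such that either (M(P₀) = α·P₀ and M(P) = β·P₀ + α·P) or (M(P₀) = α·P₀ + 2·P and M(P) = β·P₀ - α·P). Then for all λ ∈ ℤ/4ℤ and all units μ ∈ ℤ/4ℤ, setting Q = λ·P₀ + μ·P, one has e(Q, M(Q)) = e(P, M(P)). -/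
/-- Key computation in the proof of Proposition 3.4: for either of the two
matrix shapes of `M` on the basis `P₀, P` (with `α, β` odd), the pairing value
`e(Q, M Q)` of `Q = λ•P₀ + μ•P` with `μ` odd equals `e(P, M P)`. -/
theorem pairing_delta_invariance (V : Type*) [AddCommGroup V] [Module (ZMod 4) V]
    (e : V →ₗ[ZMod 4] V →ₗ[ZMod 4] ZMod 4) (halt : ∀ v : V, e v v = 0)
    (P₀ P : V) (α β : ZMod 4) (hα : IsUnit α) (hβ : IsUnit β)
    (M : V →ₗ[ZMod 4] V)
    (hM : (M P₀ = α • P₀ ∧ M P = β • P₀ + α • P) ∨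
          (M P₀ = α • P₀ + (2 : ZMod 4) • P ∧ M P = β • P₀ - α • P)) :
    ∀ l μ : ZMod 4, IsUnit μ →
      e (l • P₀ + μ • P) (M (l • P₀ + μ • P)) = e P (M P) := by
  have hskew : e P P₀ = - e P₀ P := by
    have h := halt (P₀ + P)
    simp [map_add, halt] at h
    linear_combination h
  have aux1 : ∀ μ : ZMod 4, IsUnit μ → μ ^ 2 = 1 := by decide
  have aux2 : ∀ l α μ : ZMod 4, IsUnit α → IsUnit μ →
      2 * l ^ 2 = 2 * l * (α * μ) := by decide
  intro l μ hμ
  have hμ2 := aux1 μ hμ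
  have h2 := aux2 l α μ hα hμ
  rcases hM with ⟨h0, h1⟩ | ⟨h0, h1⟩ <;>
    simp only [map_add, map_smul, h0, h1, smul_add, smul_sub, smul_smul,
      LinearMap.add_apply, LinearMap.smul_apply, LinearMap.sub_apply,
      map_sub, halt, hskew, smul_eq_mul]
  · linear_combination (-(e P₀ P * β)) * hμ2
  · linear_combination e P₀ P * h2 - (e P₀ P * β) * hμ2
end

section
/- Let V be a module over ℤ/8ℤ and e : V → V → ℤ/8ℤ an alternating (ℤ/8ℤ)-bilinear form (e(v,v) = 0 for all v). Let P, S, T ∈ V and n ∈ ℤ/8ℤ be such that: e(P, S) is a unit of ℤ/8ℤ, n is a unit of ℤ/8ℤ, e(S, T) = n·e(P, S), and 2·e(P, T) = 4. Then for every ν ∈ ℤ/8ℤ, e(P + (2ν)·S, S + (2ν)·T) = e(P, S). -/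
lemma aux_zmod8 (a b n ν : ZMod 8) (ha : IsUnit a) (hn : IsUnit n)
    (hb : 2 * b = 4) :
    a + 2 * ν * b + (2 * ν * (2 * ν * (n * a))) = a := by
  revert a b n ν; decide

/-- Concluding computation in the proof of Proposition 3.5: with `S = σ(P)`,
`T = σ²(P)` and `n = N(σ)` odd, for even `μ = 2ν` one has
`e(P + μ•S, S + μ•T) = e(P, S)` in `ℤ/8ℤ`. -/
theorem pairing_epsilon_even_case (V : Type*) [AddCommGroup V] [Module (ZMod 8) V]
    (e : V →ₗ[ZMod 8] V →ₗ[ZMod 8] ZMod 8) (halt : ∀ v : V, e v v = 0)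
    (P S T : V) (n : ZMod 8)
    (hPS : IsUnit (e P S)) (hn : IsUnit n)
    (hST : e S T = n * e P S) (hPT : 2 * e P T = 4) :
    ∀ ν : ZMod 8, e (P + (2 * ν) • S) (S + (2 * ν) • T) = e P S := by
  intro ν
  simp only [map_add, map_smul, LinearMap.add_apply, LinearMap.smul_apply,
    smul_eq_mul, halt, hST, mul_zero, add_zero]
  linear_combination aux_zmod8 (e P S) (e P T) n ν hPS hn hPT
end
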